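/- Let N ≥ 1, let v : {0, …, N−1} → ℝ be real numbers, let f = Σ_{n=0}^{N−1} v_n 1_{[n,n+1)}, and set L_j = (f ∗ f)(j) for integer j. Then ‖f ∗ f‖²_{L²(ℝ)} = (1/3) Σ_{j=0}^{2N−1} (L_j² + L_j L_{j+1} + L_{j+1}²). -/

import Mathlib

/-!
Since `f` is a combination of the integer translates of `1_{[0,1)}`, its autoconvolution is a
combination of integer translates of the tent `1_{[0,1)} ∗ 1_{[0,1)}`; hence `f ∗ f` is affine on
every `[j, j + 1]` and vanishes outside `(0, 2N)`. An affine function with endpoint values `A`, `B`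
on a unit interval has squared integral `(A² + AB + B²) / 3`; summing over `j` gives the formula.
-/

open MeasureTheory

/-- The autoconvolution of `f`: `(f ∗ f)(x) = ∫ f(t) f(x - t) dt`. -/
noncomputable def autoconv (f : ℝ → ℝ) : ℝ → ℝ := fun x => ∫ t, f t * f (x - t)

/-- The step function `f = Σ_{n=0}^{N-1} v_n 1_{[n, n+1)}`. -/
noncomputable def stepFun (N : ℕ) (v : Fin N → ℝ) : ℝ → ℝ :=
  fun x => ∑ n : Fin N, v n * (Set.Ico ((n : ℕ) : ℝ) ((n : ℕ) + 1)).indicator 1 x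

open Set Function

lemma sq_eLpNorm_two_eq_ofReal_integral_sq {α : Type*} [MeasurableSpace α] {μ : Measure α}
    {f : α → ℝ} (hf : Integrable (fun x => f x ^ 2) μ) :
    eLpNorm f 2 μ ^ 2 = ENNReal.ofReal (∫ x, f x ^ 2 ∂μ) := by
  have h := eLpNorm_nnreal_pow_eq_lintegral (f := f) (μ := μ) (p := 2) two_ne_zero
  simp only [ENNReal.coe_ofNat, NNReal.coe_ofNat, ENNReal.rpow_two] at h
  rw [h, ofReal_integral_eq_lintegral_ofReal hf (ae_of_all _ fun x => sq_nonneg _)]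
  congr 1 with x
  rw [Real.enorm_eq_ofReal_abs, ← ENNReal.ofReal_pow (abs_nonneg _), sq_abs]

lemma integral_sq_affine_unitInterval (a A B : ℝ) :
    ∫ x in a..a + 1, (A * (a + 1 - x) + B * (x - a)) ^ 2 = (A ^ 2 + A * B + B ^ 2) / 3 := by
  have h_shift := intervalIntegral.integral_comp_sub_right
    (fun u => A ^ 2 + 2 * A * (B - A) * u + (B - A) ^ 2 * u ^ 2) a (a := a) (b := a + 1)
  simp only [sub_self, add_sub_cancel_left] at h_shift
  calc _ = ∫ x in a..a + 1, A ^ 2 + 2 * A * (B - A) * (x - a) + (B - A) ^ 2 * (x - a) ^ 2 := by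
        congr 1 with x; ring
    _ = _ := by
      rw [h_shift,
        intervalIntegral.integral_add ((by fun_prop : Continuous _).intervalIntegrable _ _)
          ((by fun_prop : Continuous _).intervalIntegrable _ _),
        intervalIntegral.integral_add ((by fun_prop : Continuous _).intervalIntegrable _ _)
          ((by fun_prop : Continuous _).intervalIntegrable _ _),
        intervalIntegral.integral_const, intervalIntegral.integral_const_mul,
        intervalIntegral.integral_const_mul, integral_id, integral_pow]
      norm_num
      ring

def AffineBetweenIntegers (g : ℝ → ℝ) : Prop :=
  ∀ k : ℤ, EqOn g (fun x => g k * (k + 1 - x) + g (k + 1) * (x - k)) (Icc (k : ℝ) (k + 1))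

namespace AffineBetweenIntegers

variable {g : ℝ → ℝ}

lemma const_mul (hg : AffineBetweenIntegers g) (r : ℝ) :
    AffineBetweenIntegers (fun x => r * g x) := by
  intro k x hx
  simp only [hg k hx]
  ring

lemma sum {ι : Type*} (s : Finset ι) {g : ι → ℝ → ℝ} (hg : ∀ i ∈ s, AffineBetweenIntegers (g i)) :
    AffineBetweenIntegers (fun x => ∑ i ∈ s, g i x) := by
  intro k x hx
  simp only [Finset.sum_mul, ← Finset.sum_add_distrib]
  exact Finset.sum_congr rfl fun i hi => hg i hi k hx

lemma comp_sub_intCast (hg : AffineBetweenIntegers g) (c : ℤ) :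
    AffineBetweenIntegers (fun x => g (x - c)) := by
  intro k x hx
  have h := hg (k - c) (x := x - c) (by push_cast; constructor <;> linarith [hx.1, hx.2])
  push_cast at h
  simp only [h, sub_add_eq_add_sub]
  ring

lemma intervalIntegrable_sq (hg : AffineBetweenIntegers g) (k : ℤ) :
    IntervalIntegrable (fun x => g x ^ 2) volume k (k + 1) := by
  refine (intervalIntegrable_congr (g := fun x => (g k * (k + 1 - x) + g (k + 1) * (x - k)) ^ 2)
    fun x hx => ?_).2 ((by fun_prop : Continuous _).intervalIntegrable _ _)
  rw [uIoc_of_le (by linarith)] at hx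
  simp only [hg k (Ioc_subset_Icc_self hx)]

lemma integral_sq (hg : AffineBetweenIntegers g) (k : ℤ) :
    ∫ x in (k : ℝ)..k + 1, g x ^ 2 = (g k ^ 2 + g k * g (k + 1) + g (k + 1) ^ 2) / 3 := by
  rw [← integral_sq_affine_unitInterval]
  refine intervalIntegral.integral_congr fun x hx => ?_
  rw [uIcc_of_le (by linarith)] at hx
  simp only [hg k hx]

theorem sq_eLpNorm_two (hg : AffineBetweenIntegers g) (M : ℕ)
    (h_supp : ∀ x ∉ Ioo (0 : ℝ) M, g x = 0) :
    eLpNorm g 2 volume ^ 2 = ENNReal.ofReal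
      ((1 / 3) * ∑ j ∈ Finset.range M, (g j ^ 2 + g j * g (j + 1) + g (j + 1) ^ 2)) := by
  have h_piece : ∀ j < M, IntervalIntegrable (fun x => g x ^ 2) volume j ((j + 1 : ℕ) : ℝ) :=
    fun j _ => by simpa using hg.intervalIntegrable_sq j
  have h_supp_sq : support (fun x => g x ^ 2) ⊆ Ioc 0 M := fun x hx =>
    Ioo_subset_Ioc_self (by_contra fun h => hx (by simp [h_supp x h]))
  have h_int : Integrable (fun x => g x ^ 2) := by
    refine (integrableOn_iff_integrable_of_support_subset h_supp_sq).1 ?_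
    simpa using (IntervalIntegrable.trans_iterate h_piece).1
  have h_int_eq : ∫ x, g x ^ 2 = ∫ x in (0 : ℝ)..M, g x ^ 2 := by
    rw [intervalIntegral.integral_of_le M.cast_nonneg,
      setIntegral_eq_integral_of_forall_compl_eq_zero fun x hx =>
        notMem_support.1 fun h => hx (h_supp_sq h)]
  have h_sum := intervalIntegral.sum_integral_adjacent_intervals h_piece
  push_cast at h_sum
  rw [sq_eLpNorm_two_eq_ofReal_integral_sq h_int, h_int_eq, ← h_sum, Finset.mul_sum]
  congr 1
  refine Finset.sum_congr rfl fun j _ => ?_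
  have h_j := hg.integral_sq j
  push_cast at h_j
  rw [h_j]
  ring

end AffineBetweenIntegers

noncomputable def tent (s : ℝ) : ℝ := max (1 - |s - 1|) 0

lemma tent_eq_zero_of_notMem_Ioo {s : ℝ} (hs : s ∉ Ioo 0 2) : tent s = 0 := by
  refine max_eq_right ?_
  rw [mem_Ioo, not_and_or, not_lt, not_lt] at hs
  rcases hs with hs | hs
  · rw [abs_of_neg (by linarith)]; linarith
  · rw [abs_of_pos (by linarith)]; linarith

lemma tent_of_mem_Icc_zero_one {s : ℝ} (hs : s ∈ Icc 0 1) : tent s = s := by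
  rw [tent, abs_of_nonpos (by linarith [hs.2]), max_eq_left (by linarith [hs.1])]
  ring

lemma tent_of_mem_Icc_one_two {s : ℝ} (hs : s ∈ Icc 1 2) : tent s = 2 - s := by
  rw [tent, abs_of_nonneg (by linarith [hs.1]), max_eq_left (by linarith [hs.2])]
  ring

lemma affineBetweenIntegers_tent : AffineBetweenIntegers tent := by
  intro k x ⟨hkx, hxk⟩
  rcases (by omega : k ≤ -1 ∨ k = 0 ∨ k = 1 ∨ 2 ≤ k) with hk | rfl | rfl | hk
  · have hk' : (k : ℝ) + 1 ≤ 0 := by exact_mod_cast (by omega : k + 1 ≤ 0)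
    simp only [tent_eq_zero_of_notMem_Ioo (s := x) fun h => by linarith [h.1],
      tent_eq_zero_of_notMem_Ioo (s := k) fun h => by linarith [h.1],
      tent_eq_zero_of_notMem_Ioo (s := k + 1) fun h => by linarith [h.1]]
    ring
  · push_cast at hkx hxk ⊢
    rw [tent_of_mem_Icc_zero_one ⟨hkx, by linarith⟩, tent_of_mem_Icc_zero_one (by norm_num),
      tent_of_mem_Icc_zero_one (by norm_num)]
    ring
  · push_cast at hkx hxk ⊢
    rw [tent_of_mem_Icc_one_two ⟨hkx, by linarith⟩, tent_of_mem_Icc_one_two (by norm_num),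
      tent_of_mem_Icc_one_two (by norm_num)]
    ring
  · have hk' : (2 : ℝ) ≤ k := by exact_mod_cast hk
    simp only [tent_eq_zero_of_notMem_Ioo (s := x) fun h => by linarith [h.2],
      tent_eq_zero_of_notMem_Ioo (s := k) fun h => by linarith [h.2],
      tent_eq_zero_of_notMem_Ioo (s := k + 1) fun h => by linarith [h.2]]
    ring

lemma indicator_Ico_mul_indicator_Ico_sub (a c x : ℝ) :
    (fun t => (Ico a (a + 1)).indicator (1 : ℝ → ℝ) t * (Ico c (c + 1)).indicator 1 (x - t))
      = (Ico a (a + 1) ∩ Ioc (x - (c + 1)) (x - c)).indicator 1 := by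
  rw [inter_indicator_one, ← preimage_const_sub_Ico]
  rfl

lemma integrable_indicator_Ico_mul_indicator_Ico_sub (a c x : ℝ) :
    Integrable fun t =>
      (Ico a (a + 1)).indicator (1 : ℝ → ℝ) t * (Ico c (c + 1)).indicator 1 (x - t) := by
  rw [indicator_Ico_mul_indicator_Ico_sub,
    integrable_indicator_iff (measurableSet_Ico.inter measurableSet_Ioc)]
  exact integrableOn_const ((measure_mono inter_subset_left).trans_lt measure_Ico_lt_top).ne

lemma integral_indicator_Ico_mul_indicator_Ico_sub (a c x : ℝ) :
    ∫ t, (Ico a (a + 1)).indicator 1 t * (Ico c (c + 1)).indicator 1 (x - t)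
      = tent (x - a - c) := by
  have h_ae : (Ico a (a + 1) ∩ Ioc (x - (c + 1)) (x - c) : Set ℝ) =ᵐ[volume]
      Ico (max a (x - (c + 1))) (min (a + 1) (x - c)) := by
    rw [← Ico_inter_Ico]
    exact ae_eq_set_inter (ae_eq_refl _) Ico_ae_eq_Ioc.symm
  rw [indicator_Ico_mul_indicator_Ico_sub,
    integral_indicator_one (measurableSet_Ico.inter measurableSet_Ioc), measureReal_congr h_ae,
    Real.volume_real_Ico, tent]
  congr 1
  rcases le_total (x - a - c) 1 with h | h
  · rw [abs_of_nonpos (by linarith), min_eq_right (by linarith), max_eq_left (by linarith)]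
    ring
  · rw [abs_of_nonneg (by linarith), min_eq_left (by linarith), max_eq_right (by linarith)]
    ring

lemma autoconv_stepFun (N : ℕ) (v : Fin N → ℝ) (x : ℝ) :
    autoconv (stepFun N v) x = ∑ m : Fin N, ∑ n : Fin N, v m * v n * tent (x - m - n) := by
  have h_expand (t : ℝ) : stepFun N v t * stepFun N v (x - t) = ∑ m : Fin N, ∑ n : Fin N,
      v m * v n *
        ((Ico (m : ℝ) (m + 1)).indicator 1 t * (Ico (n : ℝ) (n + 1)).indicator 1 (x - t)) := by
    rw [stepFun, stepFun, Finset.sum_mul_sum]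
    exact Finset.sum_congr rfl fun m _ => Finset.sum_congr rfl fun n _ => by ring
  rw [autoconv, funext h_expand, integral_finsetSum _ fun m _ => integrable_finsetSum _ fun n _ =>
    (integrable_indicator_Ico_mul_indicator_Ico_sub _ _ x).const_mul _]
  refine Finset.sum_congr rfl fun m _ => ?_
  rw [integral_finsetSum _ fun n _ =>
    (integrable_indicator_Ico_mul_indicator_Ico_sub _ _ x).const_mul _]
  refine Finset.sum_congr rfl fun n _ => ?_
  rw [integral_const_mul, integral_indicator_Ico_mul_indicator_Ico_sub]

lemma affineBetweenIntegers_autoconv_stepFun (N : ℕ) (v : Fin N → ℝ) :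
    AffineBetweenIntegers (autoconv (stepFun N v)) := by
  rw [funext (autoconv_stepFun N v)]
  refine AffineBetweenIntegers.sum _ fun m _ => AffineBetweenIntegers.sum _ fun n _ => ?_
  convert (affineBetweenIntegers_tent.comp_sub_intCast (m + n)).const_mul (v m * v n) using 4
  push_cast
  ring

lemma autoconv_stepFun_eq_zero (N : ℕ) (v : Fin N → ℝ) {x : ℝ}
    (hx : x ∉ Ioo (0 : ℝ) (2 * N)) : autoconv (stepFun N v) x = 0 := by
  rw [autoconv_stepFun]
  refine Finset.sum_eq_zero fun m _ => Finset.sum_eq_zero fun n _ => ?_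
  rw [tent_eq_zero_of_notMem_Ioo, mul_zero]
  have hm : (m : ℝ) + 1 ≤ N := by exact_mod_cast m.isLt
  have hn : (n : ℝ) + 1 ≤ N := by exact_mod_cast n.isLt
  intro h
  exact hx ⟨by linarith [h.1, m.val.cast_nonneg (α := ℝ), n.val.cast_nonneg (α := ℝ)],
    by linarith [h.2]⟩

theorem L2_norm_sq_autoconv_stepFun_general (N : ℕ) (v : Fin N → ℝ)
    (L : ℕ → ℝ) (hL : ∀ j, L j = autoconv (stepFun N v) (j : ℝ)) :
    (eLpNorm (autoconv (stepFun N v)) 2 volume) ^ 2 =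
      ENNReal.ofReal
        ((1 / 3) * ∑ j ∈ Finset.range (2 * N),
          (L j ^ 2 + L j * L (j + 1) + L (j + 1) ^ 2)) := by
  have h := (affineBetweenIntegers_autoconv_stepFun N v).sq_eLpNorm_two (2 * N)
    fun x hx => autoconv_stepFun_eq_zero N v (by simpa using hx)
  simp only [hL, Nat.cast_add, Nat.cast_one]
  exact h

/-- With `L j = (f ∗ f)(j)` for the step function `f = Σ v_n 1_{[n,n+1)}`,
`‖f ∗ f‖²_{L²} = (1/3) Σ_{j=0}^{2N-1} (L_j² + L_j L_{j+1} + L_{j+1}²)`. -/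
theorem L2_norm_sq_autoconv_stepFun (N : ℕ) (hN : 1 ≤ N) (v : Fin N → ℝ)
    (L : ℕ → ℝ) (hL : ∀ j, L j = autoconv (stepFun N v) (j : ℝ)) :
    (eLpNorm (autoconv (stepFun N v)) 2 volume) ^ 2 =
      ENNReal.ofReal
        ((1 / 3) * ∑ j ∈ Finset.range (2 * N),
          (L j ^ 2 + L j * L (j + 1) + L (j + 1) ^ 2)) :=
  L2_norm_sq_autoconv_stepFun_general N v L hL
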